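/- Let X, X', X'' be iid random vectors taking values in ℝ^N with finite first moments, and assume ‖X−X'‖² and ‖X−X'‖‖X−X''‖ are integrable. Then dCov²(X,X) ≤ Var(‖X−X'‖). Equivalently, dVar(X) ≤ √(Var(‖X−X'‖)). -/

import Mathlib

open MeasureTheory ProbabilityTheory Function

/-! With `g x = E‖x - X'‖`, independence and Fubini give `E‖X - X'‖ = E g(X)` and
`E[‖X - X'‖ ‖X - X''‖] = E[g(X)²]`: given `X = x`, the factors `‖x - X'‖` and `‖x - X''‖` are
independent, each with mean `g x`.
After cancelling `E‖X - X'‖²` the claim becomes `(E g(X))² ≤ E[g(X)²]`, i.e. `Var g(X) ≥ 0`. -/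

theorem sq_integral_le_integral_sq {E : Type*} [MeasurableSpace E] {ν : Measure E}
    [IsProbabilityMeasure ν] {f : E → ℝ} (hf : MemLp f 2 ν) :
    (∫ x, f x ∂ν) ^ 2 ≤ ∫ x, f x ^ 2 ∂ν := by
  have h := variance_nonneg f ν
  rw [variance_eq_sub hf] at h
  simp only [Pi.pow_apply] at h
  linarith

section Product

variable {E : Type*} [MeasurableSpace E] {ν : Measure E} [SFinite ν] {k : E → E → ℝ}

theorem integral_prod_mul_self (x : E) :
    ∫ q : E × E, k x q.1 * k x q.2 ∂(ν.prod ν) = (∫ y, k x y ∂ν) ^ 2 := by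
  rw [integral_prod_mul (fun y => k x y) (fun y => k x y), sq]

theorem integral_prod_prod_mul_eq_integral_sq
    (h : Integrable (fun p : E × E × E => k p.1 p.2.1 * k p.1 p.2.2) (ν.prod (ν.prod ν))) :
    ∫ p : E × E × E, k p.1 p.2.1 * k p.1 p.2.2 ∂(ν.prod (ν.prod ν))
      = ∫ x, (∫ y, k x y ∂ν) ^ 2 ∂ν := by
  rw [integral_prod _ h]
  exact integral_congr_ae (.of_forall integral_prod_mul_self)

theorem integrable_sq_integral_of_integrable_prod_prod_mul
    (h : Integrable (fun p : E × E × E => k p.1 p.2.1 * k p.1 p.2.2) (ν.prod (ν.prod ν))) :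
    Integrable (fun x => (∫ y, k x y ∂ν) ^ 2) ν :=
  h.integral_prod_left.congr (.of_forall integral_prod_mul_self)

end Product

section Iid

variable {Ω E : Type*} [MeasurableSpace Ω] [MeasurableSpace E] {μ : Measure Ω}
  [IsProbabilityMeasure μ] {X X' X'' : Ω → E}

theorem map_prodMk_eq_prod_of_identDistrib (hXm : Measurable X) (hX'm : Measurable X')
    (hindep : IndepFun X X' μ) (hid : IdentDistrib X X' μ μ) :
    μ.map (fun ω => (X ω, X' ω)) = (μ.map X).prod (μ.map X) := by
  rw [(indepFun_iff_map_prod_eq_prod_map_map hXm.aemeasurable hX'm.aemeasurable).1 hindep,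
    hid.map_eq]

theorem map_prodMk_prodMk_eq_prod_of_identDistrib (hXm : Measurable X) (hX'm : Measurable X')
    (hX''m : Measurable X'') (hindep : iIndepFun ![X, X', X''] μ)
    (hid1 : IdentDistrib X X' μ μ) (hid2 : IdentDistrib X X'' μ μ) :
    μ.map (fun ω => (X ω, X' ω, X'' ω)) = (μ.map X).prod ((μ.map X).prod (μ.map X)) := by
  have hmeas : ∀ i, Measurable (![X, X', X''] i) := by
    intro i; fin_cases i <;> assumption
  have hindep₁₂ : IndepFun X' X'' μ := by simpa using hindep.indepFun (i := 1) (j := 2) (by decide)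
  have hindep₀ : IndepFun X (fun ω => (X' ω, X'' ω)) μ := by
    simpa using (hindep.indepFun_prodMk hmeas 1 2 0 (by decide) (by decide)).symm
  rw [(indepFun_iff_map_prod_eq_prod_map_map hXm.aemeasurable
      (hX'm.prodMk hX''m).aemeasurable).1 hindep₀,
    map_prodMk_eq_prod_of_identDistrib hX'm hX''m hindep₁₂ (hid1.symm.trans hid2),
    hid1.map_eq]

theorem sq_integral_le_integral_mul_of_iIndepFun {k : E → E → ℝ} (hk : Measurable (uncurry k))
    (hXm : Measurable X) (hX'm : Measurable X') (hX''m : Measurable X'')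
    (hindep : iIndepFun ![X, X', X''] μ)
    (hid1 : IdentDistrib X X' μ μ) (hid2 : IdentDistrib X X'' μ μ)
    (hint : Integrable (fun ω => k (X ω) (X' ω)) μ)
    (hint_mul : Integrable (fun ω => k (X ω) (X' ω) * k (X ω) (X'' ω)) μ) :
    (∫ ω, k (X ω) (X' ω) ∂μ) ^ 2 ≤ ∫ ω, k (X ω) (X' ω) * k (X ω) (X'' ω) ∂μ := by
  set ν := μ.map X
  have : IsProbabilityMeasure ν := Measure.isProbabilityMeasure_map hXm.aemeasurable
  have hmap₂ := map_prodMk_eq_prod_of_identDistrib hXm hX'm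
    (by simpa using hindep.indepFun (i := 0) (j := 1) (by decide)) hid1
  have hmap₃ := map_prodMk_prodMk_eq_prod_of_identDistrib hXm hX'm hX''m hindep hid1 hid2
  have hk₂ : StronglyMeasurable fun p : E × E => k p.1 p.2 := hk.stronglyMeasurable
  have hk₃ : StronglyMeasurable fun p : E × E × E => k p.1 p.2.1 * k p.1 p.2.2 :=
    ((hk.comp (measurable_fst.prodMk measurable_snd.fst)).mul
      (hk.comp (measurable_fst.prodMk measurable_snd.snd))).stronglyMeasurable
  have hint₂ : Integrable (fun p : E × E => k p.1 p.2) (ν.prod ν) := by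
    rw [← hmap₂]
    exact (integrable_map_measure hk₂.aestronglyMeasurable (hXm.prodMk hX'm).aemeasurable).2 hint
  have hint₃ : Integrable (fun p : E × E × E => k p.1 p.2.1 * k p.1 p.2.2)
      (ν.prod (ν.prod ν)) := by
    rw [← hmap₃]
    exact (integrable_map_measure hk₃.aestronglyMeasurable
      (hXm.prodMk (hX'm.prodMk hX''m)).aemeasurable).2 hint_mul
  have hmean : ∫ ω, k (X ω) (X' ω) ∂μ = ∫ x, ∫ y, k x y ∂ν ∂ν := by
    rw [← integral_prod _ hint₂, ← hmap₂,
      integral_map (hXm.prodMk hX'm).aemeasurable hk₂.aestronglyMeasurable]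
  have hmean_mul : ∫ ω, k (X ω) (X' ω) * k (X ω) (X'' ω) ∂μ = ∫ x, (∫ y, k x y ∂ν) ^ 2 ∂ν := by
    rw [← integral_prod_prod_mul_eq_integral_sq hint₃, ← hmap₃,
      integral_map (hXm.prodMk (hX'm.prodMk hX''m)).aemeasurable hk₃.aestronglyMeasurable]
  have hmemLp : MemLp (fun x => ∫ y, k x y ∂ν) 2 ν :=
    (memLp_two_iff_integrable_sq hk.stronglyMeasurable.integral_prod_right.aestronglyMeasurable).2
      (integrable_sq_integral_of_integrable_prod_prod_mul hint₃)
  rw [hmean, hmean_mul]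
  exact sq_integral_le_integral_sq hmemLp

end Iid

theorem dVar_sq_le_var_norm_sub_general
    {Ω : Type*} [MeasurableSpace Ω] (μ : Measure Ω) [IsProbabilityMeasure μ]
    (N : ℕ)
    (X X' X'' : Ω → EuclideanSpace ℝ (Fin N))
    (hXm : Measurable X) (hX'm : Measurable X') (hX''m : Measurable X'')
    (hindep : iIndepFun ![X, X', X''] μ)
    (hid1 : IdentDistrib X X' μ μ)
    (hid2 : IdentDistrib X X'' μ μ)
    (hXi : Integrable X μ) (hX'i : Integrable X' μ)
    (h2 : Integrable (fun ω => ‖X ω - X' ω‖ * ‖X ω - X'' ω‖) μ) :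
    (∫ ω, ‖X ω - X' ω‖ ^ 2 ∂μ) + (∫ ω, ‖X ω - X' ω‖ ∂μ) ^ 2
        - 2 * ∫ ω, ‖X ω - X' ω‖ * ‖X ω - X'' ω‖ ∂μ
      ≤ (∫ ω, ‖X ω - X' ω‖ ^ 2 ∂μ) - (∫ ω, ‖X ω - X' ω‖ ∂μ) ^ 2 := by
  have hk : Measurable (uncurry fun x y : EuclideanSpace ℝ (Fin N) => ‖x - y‖) :=
    (continuous_fst.sub continuous_snd).norm.measurable
  have hsq := sq_integral_le_integral_mul_of_iIndepFun hk hXm hX'm hX''m hindep hid1 hid2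
    (hXi.sub hX'i).norm h2
  linarith

/-- For iid random vectors `X, X', X''` in `ℝ^N` with finite first moments,
`dCov²(X,X) = E[‖X−X'‖²] + (E[‖X−X'‖])² − 2E[‖X−X'‖‖X−X''‖] ≤ Var(‖X−X'‖)`,
where `Var(U) = E[U²] − (E[U])²`. -/
theorem dVar_sq_le_var_norm_sub
    {Ω : Type*} [MeasurableSpace Ω] (μ : Measure Ω) [IsProbabilityMeasure μ]
    (N : ℕ)
    (X X' X'' : Ω → EuclideanSpace ℝ (Fin N))
    (hXm : Measurable X) (hX'm : Measurable X') (hX''m : Measurable X'')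
    (hindep : iIndepFun ![X, X', X''] μ)
    (hid1 : IdentDistrib X X' μ μ)
    (hid2 : IdentDistrib X X'' μ μ)
    (hXi : Integrable X μ) (hX'i : Integrable X' μ) (hX''i : Integrable X'' μ)
    (h1 : Integrable (fun ω => ‖X ω - X' ω‖ ^ 2) μ)
    (h2 : Integrable (fun ω => ‖X ω - X' ω‖ * ‖X ω - X'' ω‖) μ) :
    (∫ ω, ‖X ω - X' ω‖ ^ 2 ∂μ) + (∫ ω, ‖X ω - X' ω‖ ∂μ) ^ 2
        - 2 * ∫ ω, ‖X ω - X' ω‖ * ‖X ω - X'' ω‖ ∂μ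
      ≤ (∫ ω, ‖X ω - X' ω‖ ^ 2 ∂μ) - (∫ ω, ‖X ω - X' ω‖ ∂μ) ^ 2 :=
  dVar_sq_le_var_norm_sub_general μ N X X' X'' hXm hX'm hX''m hindep hid1 hid2 hXi hX'i h2
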